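/- Let φ : k⟨X⟩ → k be a linear functional satisfying the trace property φ(pq) = φ(qp), positivity φ(f*f) ≥ 0, φ(1) = 1, symmetry φ(f*) = φ(f)*, and contractivity with respect to the 1-norm (i.e., |φ(Σ a_w w)| ≤ Σ |a_w|). Then φ(g*(1 - X_i^2)g) ≥ 0 for all g ∈ k⟨X⟩ and all i; consequently φ(M_k) ⊆ ℝ_{≥0}. -/

import Mathlib

abbrev NCPoly (k : Type) [CommSemiring k] (n : ℕ) := MonoidAlgebra k (FreeMonoid (Fin n))

noncomputable def ncWord (k : Type) [CommSemiring k] {n : ℕ} (w : FreeMonoid (Fin n)) : NCPoly k n :=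
  MonoidAlgebra.of k (FreeMonoid (Fin n)) w

noncomputable def ncX (k : Type) [CommSemiring k] {n : ℕ} (i : Fin n) : NCPoly k n :=
  ncWord k (FreeMonoid.of i)

/-- The involution on `k⟨X⟩` fixing the variables and conjugating coefficients. -/
noncomputable def ncStar {k : Type} [CommSemiring k] [StarRing k] {n : ℕ} (f : NCPoly k n) : NCPoly k n :=
  MonoidAlgebra.ofCoeff (Finsupp.mapDomain FreeMonoid.reverse (Finsupp.mapRange star (star_zero k) f.coeff))

/-- `f` and `g` are cyclically equivalent: `f - g` is a sum of commutators. -/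
def IsCyclicEquiv {k : Type} [CommRing k] {n : ℕ} (f g : NCPoly k n) : Prop :=
  f - g ∈ AddSubmonoid.closure {x : NCPoly k n | ∃ p q, x = p * q - q * p}

/-- The quadratic module generated by the `1 - X_i^2`: all finite sums of
elements `g* g` and `g* (1 - X_i^2) g`. -/
noncomputable def QuadMod (k : Type) [CommRing k] [StarRing k] (n : ℕ) : AddSubmonoid (NCPoly k n) :=
  AddSubmonoid.closure
    ({x | ∃ g : NCPoly k n, x = ncStar g * g} ∪
     {x | ∃ (g : NCPoly k n) (i : Fin n), x = ncStar g * (1 - (ncX k i) ^ 2) * g})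

/-- Evaluation of a noncommutative polynomial at a tuple of matrices. -/
noncomputable def ncEval {k : Type} [CommRing k] {n s : ℕ}
    (A : Fin n → Matrix (Fin s) (Fin s) k) :
    NCPoly k n →ₐ[k] Matrix (Fin s) (Fin s) k :=
  MonoidAlgebra.lift k (Matrix (Fin s) (Fin s) k) (FreeMonoid (Fin n)) (FreeMonoid.lift A)

/-- A self-adjoint contraction matrix: `A* = A` and `1 - A²` positive semidefinite. -/
def IsSAContraction {k : Type} [CommRing k] [StarRing k] [PartialOrder k] [StarOrderedRing k]
    {s : ℕ} (A : Matrix (Fin s) (Fin s) k) : Prop :=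
  A.IsHermitian ∧ (1 - A * A).PosSemidef

/-! With `a = X_i^2`, the identity `m (1 - a) + a^m = 1 + Σ_{l<m} Σ_{j<l} (1 - a) a^j (1 - a)`
expresses `m (1 - X_i^2) + X_i^{2m}` as `1` plus hermitian squares. Conjugating by `g` and applying
`φ` gives `m φ(g*(1 - X_i^2)g) + φ(g* X_i^{2m} g) ≥ 0`. By the trace property
`φ(g* X_i^{2m} g) = φ(X_i^{2m} g g*)`, and multiplying by a monomial only shifts coefficients, so
contractivity bounds this term by the 1-norm of `g g*`, independently of `m`. Letting `m → ∞` gives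
`φ(g*(1 - X_i^2)g) ≥ 0`. -/

open scoped ComplexOrder

section NCStar

variable {k : Type} [CommSemiring k] {n : ℕ}

lemma ncX_pow (i : Fin n) (j : ℕ) : ncX k i ^ j = ncWord k (FreeMonoid.of i ^ j) :=
  (map_pow _ _ _).symm

variable [StarRing k]

lemma ncStar_single (w : FreeMonoid (Fin n)) (c : k) :
    ncStar (MonoidAlgebra.single w c) = MonoidAlgebra.single w.reverse (star c) := by
  unfold ncStar
  rw [MonoidAlgebra.coeff_single, Finsupp.mapRange_single, Finsupp.mapDomain_single]
  rfl

lemma ncStar_zero : ncStar (0 : NCPoly k n) = 0 := by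
  unfold ncStar
  rw [show (0 : NCPoly k n).coeff = 0 from rfl, Finsupp.mapRange_zero, Finsupp.mapDomain_zero]
  rfl

lemma ncStar_add (f g : NCPoly k n) : ncStar (f + g) = ncStar f + ncStar g := by
  unfold ncStar
  rw [MonoidAlgebra.coeff_add, Finsupp.mapRange_add star_add, Finsupp.mapDomain_add]
  rfl

lemma ncStar_one : ncStar (1 : NCPoly k n) = 1 := by
  rw [MonoidAlgebra.one_def, ncStar_single, star_one]
  rfl

lemma ncStar_mul (f g : NCPoly k n) : ncStar (f * g) = ncStar g * ncStar f := by
  induction f using MonoidAlgebra.induction_linear with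
  | zero => simp [ncStar_zero]
  | add p q hp hq => rw [add_mul, ncStar_add, hp, hq, ncStar_add, mul_add]
  | single w c =>
    induction g using MonoidAlgebra.induction_linear with
    | zero => simp [ncStar_zero]
    | add p q hp hq => rw [mul_add, ncStar_add, hp, hq, ncStar_add, add_mul]
    | single v d =>
      rw [MonoidAlgebra.single_mul_single, ncStar_single, ncStar_single, ncStar_single,
        MonoidAlgebra.single_mul_single, FreeMonoid.reverse_mul, star_mul', mul_comm]

lemma ncStar_ncX (i : Fin n) : ncStar (ncX k i) = ncX k i := by
  rw [ncX, ncWord, MonoidAlgebra.of_apply, ncStar_single, FreeMonoid.reverse_of, star_one]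

lemma ncStar_ncX_pow (i : Fin n) (j : ℕ) : ncStar (ncX k i ^ j) = ncX k i ^ j := by
  induction j with
  | zero => rw [pow_zero, ncStar_one]
  | succ j ih => rw [pow_succ, ncStar_mul, ih, ncStar_ncX, pow_mul_comm']

end NCStar

lemma ncStar_one_sub_ncX_sq {k : Type} [CommRing k] [StarRing k] {n : ℕ} (i : Fin n) :
    ncStar (1 - ncX k i ^ 2) = 1 - ncX k i ^ 2 := by
  have hsub : ∀ f g : NCPoly k n, ncStar (f - g) = ncStar f - ncStar g := fun f g ↦
    eq_sub_of_add_eq (by rw [← ncStar_add, sub_add_cancel])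
  rw [hsub, ncStar_one, ncStar_ncX_pow]

/- The paper's identity `1 - a + a^m/m = 1/m + (1/m)(1 - a)^2 Σ_{k ≤ m-2} (m-1-k) a^k` times `m`,
with `(m-1-k) a^k` spread into a double sum and `(1 - a)^2 a^j` written as the hermitian square
`(1 - a) a^j (1 - a)`, so that no division, truncated subtraction or commutation is needed. -/
lemma nsmul_one_sub_add_pow {R : Type*} [Ring R] (a : R) (m : ℕ) :
    m • (1 - a) + a ^ m =
      1 + ∑ l ∈ Finset.range m, ∑ j ∈ Finset.range l, (1 - a) * a ^ j * (1 - a) := by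
  induction m with
  | zero => simp
  | succ m ih =>
    rw [Finset.sum_range_succ, ← add_assoc, ← ih, ← Finset.sum_mul, ← Finset.mul_sum,
      mul_neg_geom_sum, succ_nsmul, pow_succ]
    noncomm_ring

lemma sum_norm_coeff_single_one_mul {k M : Type*} [Semiring k] [Norm k] [Monoid M]
    [IsLeftCancelMul M] (w : M) (h : MonoidAlgebra k M) :
    ∑ u ∈ (MonoidAlgebra.single w 1 * h).coeff.support, ‖(MonoidAlgebra.single w 1 * h).coeff u‖
      = ∑ v ∈ h.coeff.support, ‖h.coeff v‖ := by
  classical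
  have hinj : Function.Injective (w * ·) := fun _ _ ↦ mul_left_cancel
  have hmap : MonoidAlgebra.single w (1 : k) * h = MonoidAlgebra.mapDomain (w * ·) h := by
    induction h using MonoidAlgebra.induction_linear with
    | zero => simp
    | add p q hp hq => rw [mul_add, hp, hq, MonoidAlgebra.mapDomain_add]
    | single v d => rw [MonoidAlgebra.single_mul_single, one_mul, MonoidAlgebra.mapDomain_single]
  rw [hmap]
  show ∑ u ∈ (Finsupp.mapDomain (w * ·) h.coeff).support, ‖Finsupp.mapDomain (w * ·) h.coeff u‖ = _
  rw [Finsupp.mapDomain_support_of_injective hinj, Finset.sum_image fun _ _ _ _ hh ↦ hinj hh]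
  simp only [Finsupp.mapDomain_apply hinj]

lemma RCLike.exists_nonneg_eq_algebraMap_iff {k : Type} [RCLike k] {z : k} :
    (∃ r : ℝ, 0 ≤ r ∧ z = algebraMap ℝ k r) ↔ 0 ≤ z := by
  rw [RCLike.nonneg_iff_exists_ofReal]
  simp only [RCLike.algebraMap_eq_ofReal, eq_comm (a := z), ge_iff_le]

lemma RCLike.nonneg_of_nsmul_add_nonneg {k : Type} [RCLike k] {ρ : k} {C : ℝ} (v : ℕ → k)
    (hv : ∀ m, 0 ≤ v m) (hC : ∀ m, ‖v m‖ ≤ C) (h : ∀ m : ℕ, 0 ≤ m • ρ + v m) : 0 ≤ ρ := by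
  have hre : ∀ m : ℕ, -C ≤ m * RCLike.re ρ := fun m ↦ by
    have := (RCLike.nonneg_iff.mp (h m)).1
    rw [map_add, map_nsmul, nsmul_eq_mul] at this
    linarith [(RCLike.re_le_norm (v m)).trans (hC m)]
  have him : RCLike.im ρ = 0 := by
    have := (RCLike.nonneg_iff.mp (h 1)).2
    rwa [map_add, one_smul, (RCLike.nonneg_iff.mp (hv 1)).2, add_zero] at this
  refine RCLike.nonneg_iff.mpr ⟨?_, him⟩
  by_contra! hneg
  obtain ⟨m, hm⟩ := exists_nat_gt (C / -RCLike.re ρ)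
  rw [div_lt_iff₀ (neg_pos.mpr hneg)] at hm
  linarith [hre m]

section Functional

variable {k : Type} [RCLike k] {n : ℕ} (φ : NCPoly k n →ₗ[k] k)

lemma map_star_mul_star_mul_mul_nonneg (hpos : ∀ f : NCPoly k n, 0 ≤ φ (ncStar f * f))
    (g f : NCPoly k n) : 0 ≤ φ (ncStar g * (ncStar f * f) * g) := by
  simpa only [ncStar_mul, mul_assoc] using hpos (f * g)

lemma norm_map_star_mul_ncX_pow_mul_le (htr : ∀ p q : NCPoly k n, φ (p * q) = φ (q * p))
    (hcontr : ∀ f : NCPoly k n, ‖φ f‖ ≤ ∑ w ∈ f.coeff.support, ‖f.coeff w‖)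
    (g : NCPoly k n) (i : Fin n) (j : ℕ) :
    ‖φ (ncStar g * ncX k i ^ j * g)‖ ≤
      ∑ w ∈ (g * ncStar g).coeff.support, ‖(g * ncStar g).coeff w‖ := by
  rw [htr, ← mul_assoc, htr, ncX_pow]
  exact (hcontr _).trans (sum_norm_coeff_single_one_mul _ _).le

theorem map_star_mul_one_sub_ncX_sq_mul_nonneg (htr : ∀ p q : NCPoly k n, φ (p * q) = φ (q * p))
    (hpos : ∀ f : NCPoly k n, 0 ≤ φ (ncStar f * f))
    (hcontr : ∀ f : NCPoly k n, ‖φ f‖ ≤ ∑ w ∈ f.coeff.support, ‖f.coeff w‖)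
    (g : NCPoly k n) (i : Fin n) : 0 ≤ φ (ncStar g * (1 - ncX k i ^ 2) * g) := by
  set X := ncX k i
  have hpow : ∀ j, (X ^ 2) ^ j = ncStar (X ^ j) * X ^ j := fun j ↦ by
    rw [ncStar_ncX_pow, ← pow_mul, mul_comm, pow_mul, sq]
  have hsandwich : ∀ j, (1 - X ^ 2) * (X ^ 2) ^ j * (1 - X ^ 2)
      = ncStar (X ^ j * (1 - X ^ 2)) * (X ^ j * (1 - X ^ 2)) := fun j ↦ by
    rw [ncStar_mul, ncStar_one_sub_ncX_sq, hpow]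
    noncomm_ring
  have hpow_nonneg : ∀ m, 0 ≤ φ (ncStar g * (X ^ 2) ^ m * g) := fun m ↦ by
    rw [hpow]
    exact map_star_mul_star_mul_mul_nonneg φ hpos g _
  have hpow_bound : ∀ m, ‖φ (ncStar g * (X ^ 2) ^ m * g)‖
      ≤ ∑ w ∈ (g * ncStar g).coeff.support, ‖(g * ncStar g).coeff w‖ := fun m ↦ by
    rw [← pow_mul]
    exact norm_map_star_mul_ncX_pow_mul_le φ htr hcontr g i _
  refine RCLike.nonneg_of_nsmul_add_nonneg _ hpow_nonneg hpow_bound fun m ↦ ?_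
  have hconj := congrArg (fun x ↦ φ (ncStar g * x * g)) (nsmul_one_sub_add_pow (X ^ 2) m)
  simp only [mul_add, add_mul, mul_one, Finset.mul_sum, Finset.sum_mul, mul_smul_comm,
    smul_mul_assoc, map_add, map_sum, map_nsmul] at hconj
  rw [hconj]
  refine add_nonneg (hpos g) (Finset.sum_nonneg fun l _ ↦ Finset.sum_nonneg fun j _ ↦ ?_)
  rw [hsandwich]
  exact map_star_mul_star_mul_mul_nonneg φ hpos g _

end Functional

theorem stmt10_general {k : Type} [RCLike k] {n : ℕ} (φ : NCPoly k n →ₗ[k] k)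
    (htr : ∀ p q : NCPoly k n, φ (p * q) = φ (q * p))
    (hpos : ∀ f : NCPoly k n, ∃ r : ℝ, 0 ≤ r ∧ φ (ncStar f * f) = algebraMap ℝ k r)
    (hcontr : ∀ f : NCPoly k n, ‖φ f‖ ≤ ∑ w ∈ f.coeff.support, ‖f.coeff w‖) :
    (∀ (g : NCPoly k n) (i : Fin n),
      ∃ r : ℝ, 0 ≤ r ∧ φ (ncStar g * (1 - (ncX k i) ^ 2) * g) = algebraMap ℝ k r) ∧
    (∀ a ∈ QuadMod k n, ∃ r : ℝ, 0 ≤ r ∧ φ a = algebraMap ℝ k r) := by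
  simp only [RCLike.exists_nonneg_eq_algebraMap_iff] at hpos ⊢
  have hgen := map_star_mul_one_sub_ncX_sq_mul_nonneg φ htr hpos hcontr
  refine ⟨hgen, fun a ha ↦ ?_⟩
  induction ha using AddSubmonoid.closure_induction with
  | mem x hx =>
    rcases hx with ⟨g, rfl⟩ | ⟨g, i, rfl⟩
    exacts [hpos g, hgen g i]
  | zero => rw [map_zero]
  | add x y _ _ hx hy => rw [map_add]; exact add_nonneg hx hy

theorem stmt10 {k : Type} [RCLike k] {n : ℕ} (φ : NCPoly k n →ₗ[k] k)
    (htr : ∀ p q : NCPoly k n, φ (p * q) = φ (q * p))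
    (hpos : ∀ f : NCPoly k n, ∃ r : ℝ, 0 ≤ r ∧ φ (ncStar f * f) = algebraMap ℝ k r)
    (h1 : φ 1 = 1)
    (hstar : ∀ f : NCPoly k n, φ (ncStar f) = star (φ f))
    (hcontr : ∀ f : NCPoly k n, ‖φ f‖ ≤ ∑ w ∈ f.coeff.support, ‖f.coeff w‖) :
    (∀ (g : NCPoly k n) (i : Fin n),
      ∃ r : ℝ, 0 ≤ r ∧ φ (ncStar g * (1 - (ncX k i) ^ 2) * g) = algebraMap ℝ k r) ∧
    (∀ a ∈ QuadMod k n, ∃ r : ℝ, 0 ≤ r ∧ φ a = algebraMap ℝ k r) :=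
  stmt10_general φ htr hpos hcontr
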